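/- If a signed measure σ = Σᵢ ωᵢ δ_{xᵢ} supported in a set τ ⊂ ℝ^d has vanishing moments of order q+1 (i.e., annihilates all polynomials of total degree ≤ q) and unit coefficient norm ‖ω‖₂ = 1, then for any function f that is (q+1)-times continuously differentiable on an open convex set O containing τ, |Σᵢ ωᵢ f(xᵢ)| ≤ √|τ| · (d/2)^{q+1} · diam(τ)^{q+1} / (q+1)! · ‖f‖_{C^{q+1}(O)}. -/

import Mathlib

/-!
Expand `f` to order `q` about a point `c` of the convex hull of the support points. The Taylor
polynomial has total degree at most `q`, so the weights annihilate it and only the Lagrange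
remainders `f(xᵢ) - Tf(xᵢ)` survive; each is at most `B (∑ⱼ |xᵢⱼ - cⱼ|)^{q+1} / (q+1)!`.
Take for `c` the metric projection of the centre of the bounding box onto the convex hull: it lies
in `O` and is no farther than the box centre from any support point, so
`∑ⱼ |xᵢⱼ - cⱼ| ≤ √d ‖xᵢ - c‖ ≤ d · diam τ / 2`. Finally `∑ᵢ |ωᵢ| ≤ √|τ|` by Cauchy–Schwarz.
-/

open scoped Nat Pointwise
open Set

theorem Finset.sum_abs_le_sqrt_card_mul_sqrt_sum_sq {ι : Type*} (s : Finset ι) (g : ι → ℝ) :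
    ∑ i ∈ s, |g i| ≤ √(s.card : ℝ) * √(∑ i ∈ s, g i ^ 2) := by
  rw [← Real.sqrt_mul (Nat.cast_nonneg _)]
  refine Real.le_sqrt_of_sq_le ?_
  simpa only [sq_abs] using sq_sum_le_card_mul_sum_sq (s := s) (f := fun i => |g i|)

theorem abs_sum_mul_le_sqrt_card_mul {ι : Type*} [Fintype ι] {ω g : ι → ℝ}
    (hω : ∑ i, ω i ^ 2 ≤ 1) {M : ℝ} (hM : 0 ≤ M) (hg : ∀ i, ω i ≠ 0 → |g i| ≤ M) :
    |∑ i, ω i * g i| ≤ √(Finset.univ.filter fun i => ω i ≠ 0).card * M := by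
  set S := Finset.univ.filter fun i => ω i ≠ 0
  have hS : ∑ i ∈ S, ω i ^ 2 ≤ 1 :=
    (Finset.sum_le_sum_of_subset_of_nonneg S.subset_univ fun i _ _ => sq_nonneg _).trans hω
  calc |∑ i, ω i * g i| = |∑ i ∈ S, ω i * g i| := by
        rw [Finset.sum_filter_of_ne fun i _ h => left_ne_zero_of_mul h]
    _ ≤ ∑ i ∈ S, |ω i| * M := by
        refine (Finset.abs_sum_le_sum_abs _ _).trans (Finset.sum_le_sum fun i hi => ?_)
        rw [abs_mul]
        exact mul_le_mul_of_nonneg_left (hg i (Finset.mem_filter.mp hi).2) (abs_nonneg _)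
    _ ≤ √(S.card : ℝ) * √(∑ i ∈ S, ω i ^ 2) * M := by
        rw [← Finset.sum_mul]
        gcongr
        exact S.sum_abs_le_sqrt_card_mul_sqrt_sum_sq ω
    _ ≤ √(S.card : ℝ) * M := by
        gcongr
        exact mul_le_of_le_one_right (Real.sqrt_nonneg _) (Real.sqrt_le_one.mpr hS)

namespace EuclideanSpace

variable {ι : Type*} [Fintype ι]

theorem sum_abs_le_sqrt_card_mul_norm (v : EuclideanSpace ℝ ι) :
    ∑ j, |v j| ≤ √(Fintype.card ι : ℝ) * ‖v‖ := by
  simpa [EuclideanSpace.norm_eq] using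
    Finset.univ.sum_abs_le_sqrt_card_mul_sqrt_sum_sq (fun j => v j)

theorem norm_le_sqrt_card_mul {v : EuclideanSpace ℝ ι} {r : ℝ} (hr : 0 ≤ r)
    (hv : ∀ j, |v j| ≤ r) : ‖v‖ ≤ √(Fintype.card ι : ℝ) * r := by
  rw [EuclideanSpace.norm_eq, ← Real.sqrt_sq hr, ← Real.sqrt_mul (Nat.cast_nonneg _)]
  gcongr
  calc ∑ j, ‖v j‖ ^ 2 ≤ ∑ _j : ι, r ^ 2 := by
        gcongr with j
        exact hv j
    _ = _ := by simp

theorem exists_forall_norm_sub_le_sqrt_card_mul_diam (s : Finset (EuclideanSpace ℝ ι))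
    (hs : s.Nonempty) :
    ∃ b : EuclideanSpace ℝ ι, ∀ y ∈ s,
      ‖y - b‖ ≤ √(Fintype.card ι : ℝ) * (Metric.diam (s : Set (EuclideanSpace ℝ ι)) / 2) := by
  set D := Metric.diam (s : Set (EuclideanSpace ℝ ι))
  have hD : ∀ y ∈ s, ∀ z ∈ s, ∀ j, y j - z j ≤ D := fun y hy z hz j =>
    (le_abs_self _).trans <| (PiLp.dist_apply_le y z j).trans <|
      Metric.dist_le_diam_of_mem s.finite_toSet.isBounded hy hz
  refine ⟨WithLp.toLp 2 fun j => (s.inf' hs (· j) + s.sup' hs (· j)) / 2, fun y hy => ?_⟩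
  refine norm_le_sqrt_card_mul (by positivity) fun j => ?_
  obtain ⟨z, hz, hinf⟩ := s.exists_mem_eq_inf' hs (· j)
  obtain ⟨w, hw, hsup⟩ := s.exists_mem_eq_sup' hs (· j)
  have hzy := s.inf'_le (· j) hy
  have hyw := s.le_sup' (· j) hy
  have hwz := hD w hw z hz j
  simp only [PiLp.sub_apply, abs_le]
  constructor <;> linarith

end EuclideanSpace

theorem exists_mem_forall_norm_sub_le_norm_sub {F : Type*} [NormedAddCommGroup F]
    [InnerProductSpace ℝ F] {K : Set F} (hne : K.Nonempty) (hK : IsComplete K)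
    (hconv : Convex ℝ K) (b : F) : ∃ c ∈ K, ∀ w ∈ K, ‖w - c‖ ≤ ‖w - b‖ := by
  obtain ⟨c, hc, hmin⟩ := exists_norm_eq_iInf_of_complete_convex hne hK hconv b
  refine ⟨c, hc, fun w hw => ?_⟩
  have hinner := (norm_eq_iInf_iff_real_inner_le_zero hconv hc).mp hmin w hw
  have hexpand : ‖w - b‖ ^ 2 = ‖w - c‖ ^ 2 - 2 * inner ℝ (b - c) (w - c) + ‖b - c‖ ^ 2 := by
    rw [show w - b = (w - c) - (b - c) by abel, norm_sub_sq_real, real_inner_comm]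
  refine le_of_pow_le_pow_left₀ two_ne_zero (norm_nonneg _) ?_
  nlinarith [sq_nonneg ‖b - c‖]

theorem exists_mem_convexHull_sum_abs_sub_le {ι : Type*} [Fintype ι]
    (s : Finset (EuclideanSpace ℝ ι)) (hs : s.Nonempty) :
    ∃ c ∈ convexHull ℝ (s : Set (EuclideanSpace ℝ ι)), ∀ y ∈ s,
      ∑ j, |y j - c j| ≤ Fintype.card ι * Metric.diam (s : Set (EuclideanSpace ℝ ι)) / 2 := by
  set n : ℝ := (Fintype.card ι : ℝ)
  set D := Metric.diam (s : Set (EuclideanSpace ℝ ι))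
  obtain ⟨b, hb⟩ := EuclideanSpace.exists_forall_norm_sub_le_sqrt_card_mul_diam s hs
  obtain ⟨c, hc, hproj⟩ := exists_mem_forall_norm_sub_le_norm_sub
    (hs.to_set.mono (subset_convexHull ℝ _))
    (s.finite_toSet.isCompact_convexHull (𝕜 := ℝ)).isComplete (convex_convexHull ℝ _) b
  refine ⟨c, hc, fun y hy => ?_⟩
  calc ∑ j, |y j - c j| = ∑ j, |(y - c) j| := rfl
    _ ≤ √n * ‖y - c‖ := EuclideanSpace.sum_abs_le_sqrt_card_mul_norm _
    _ ≤ √n * (√n * (D / 2)) := by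
        gcongr
        exact (hproj y (subset_convexHull ℝ _ hy)).trans (hb y hy)
    _ = n * D / 2 := by
        rw [← mul_assoc, Real.mul_self_sqrt (Nat.cast_nonneg _)]
        ring

section Line

variable {E F : Type*} [NormedAddCommGroup E] [NormedSpace ℝ E] [NormedAddCommGroup F]
  [NormedSpace ℝ F] {f : E → F} {O : Set E}

theorem iteratedDerivWithin_comp_add_smul {n : WithTop ℕ∞} (hO : IsOpen O)
    (hf : ContDiffOn ℝ n f O) (c h : E) {s : Set ℝ} (hs : UniqueDiffOn ℝ s)
    (hsO : ∀ t ∈ s, c + t • h ∈ O) {k : ℕ} (hk : k ≤ n) {t : ℝ} (ht : t ∈ s) :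
    iteratedDerivWithin k (fun t => f (c + t • h)) s t =
      iteratedFDerivWithin ℝ k f O (c + t • h) (fun _ => h) := by
  let L : ℝ →L[ℝ] E := ContinuousLinearMap.smulRight (1 : ℝ →L[ℝ] ℝ) h
  set O' : Set E := (c + ·) ⁻¹' O
  have hO' : IsOpen O' := hO.preimage (continuous_const_add c)
  have hU : IsOpen (L ⁻¹' O') := hO'.preimage L.continuous
  have hfc : ContDiffOn ℝ n (fun z => f (c + z)) O' :=
    hf.comp (contDiff_const.add contDiff_id).contDiffOn (fun z hz => hz)
  have hcO : c +ᵥ O' = O := by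
    rw [← Set.image_vadd]
    exact Set.image_preimage_eq O (add_left_surjective c)
  rw [iteratedDerivWithin_eq_iteratedFDerivWithin,
    show (fun t => f (c + t • h)) = (fun z => f (c + z)) ∘ L from rfl,
    iteratedFDerivWithin_subset (t := L ⁻¹' O') hsO hs hU.uniqueDiffOn
      ((hfc.comp L.contDiff.contDiffOn (fun z hz => hz)).of_le hk) ht,
    L.iteratedFDerivWithin_comp_right hfc hO'.uniqueDiffOn hU.uniqueDiffOn (hsO t ht) hk]
  simp [L, iteratedFDerivWithin_comp_add_left, hcO]

theorem abs_sub_sum_iteratedFDerivWithin_le {f : E → ℝ} {q : ℕ} (hO : IsOpen O)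
    (hf : ContDiffOn ℝ (q + 1) f O) {c y : E} (hcy : segment ℝ c y ⊆ O) {C : ℝ}
    (hC : ∀ z ∈ segment ℝ c y, |iteratedFDerivWithin ℝ (q + 1) f O z (fun _ => y - c)| ≤ C) :
    |f y - ∑ k ∈ Finset.range (q + 1),
        (k ! : ℝ)⁻¹ * iteratedFDerivWithin ℝ k f O c (fun _ => y - c)| ≤ C / (q + 1)! := by
  set h := y - c
  have hseg : ∀ t ∈ Icc (0 : ℝ) 1, c + t • h ∈ segment ℝ c y := fun t ht => by
    rw [segment_eq_image']; exact ⟨t, ht, rfl⟩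
  set U : Set ℝ := {t | c + t • h ∈ O}
  have hU : IsOpen U := hO.preimage (by fun_prop)
  have hg : ContDiffOn ℝ (q + 1) (fun t => f (c + t • h)) U :=
    hf.comp (by fun_prop : ContDiff ℝ (q + 1) fun t : ℝ => c + t • h).contDiffOn fun t ht => ht
  obtain ⟨ξ, hξ, hlagrange⟩ := taylor_mean_remainder_lagrange_iteratedDeriv zero_ne_one
    (hg.mono fun t ht => hcy (hseg t (by rwa [Set.uIcc_of_le zero_le_one] at ht)))
  rw [Set.uIoo_of_le zero_le_one] at hξ
  rw [Set.uIcc_of_le zero_le_one] at hlagrange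
  have hξU : ξ ∈ U := hcy (hseg ξ (Ioo_subset_Icc_self hξ))
  have htaylor : taylorWithinEval (fun t => f (c + t • h)) q (Icc 0 1) 0 1 =
      ∑ k ∈ Finset.range (q + 1), (k ! : ℝ)⁻¹ * iteratedFDerivWithin ℝ k f O c (fun _ => h) := by
    rw [taylor_within_apply]
    refine Finset.sum_congr rfl fun k hk => ?_
    rw [iteratedDerivWithin_comp_add_smul hO hf c h (uniqueDiffOn_Icc zero_lt_one)
      (fun t ht => hcy (hseg t ht)) (by exact_mod_cast (Finset.mem_range.mp hk).le)
      (left_mem_Icc.mpr zero_le_one)]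
    simp
  have hremainder : iteratedDeriv (q + 1) (fun t => f (c + t • h)) ξ =
      iteratedFDerivWithin ℝ (q + 1) f O (c + ξ • h) (fun _ => h) := by
    rw [← iteratedDerivWithin_of_isOpen hU hξU]
    exact iteratedDerivWithin_comp_add_smul hO hf c h hU.uniqueDiffOn (fun t ht => ht) le_rfl hξU
  rw [show f y = f (c + (1 : ℝ) • h) by simp [h], ← htaylor, hlagrange, hremainder]
  simpa [abs_div] using div_le_div_of_nonneg_right (hC _ (hseg ξ (Ioo_subset_Icc_self hξ)))
    (Nat.cast_nonneg (q + 1)!)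

end Line

namespace ContinuousMultilinearMap

variable {ι : Type*} [Fintype ι] [DecidableEq ι] {k : ℕ}
  (Φ : ContinuousMultilinearMap ℝ (fun _ : Fin k => EuclideanSpace ℝ ι) ℝ)

theorem apply_const_eq_sum (u : EuclideanSpace ℝ ι) :
    Φ (fun _ => u) =
      ∑ v : Fin k → ι, (∏ j, u (v j)) * Φ (fun j => EuclideanSpace.single (v j) 1) := by
  conv_lhs => rw [← (EuclideanSpace.basisFun ι ℝ).sum_repr u]
  rw [Φ.map_sum]
  simp [Φ.map_smul_univ]

theorem abs_apply_const_le {B : ℝ}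
    (hB : ∀ v : Fin k → ι, |Φ (fun j => EuclideanSpace.single (v j) 1)| ≤ B)
    (u : EuclideanSpace ℝ ι) : |Φ (fun _ => u)| ≤ B * (∑ j, |u j|) ^ k := by
  rw [apply_const_eq_sum]
  calc |∑ v : Fin k → ι, (∏ j, u (v j)) * Φ (fun j => EuclideanSpace.single (v j) 1)|
      ≤ ∑ v : Fin k → ι, (∏ j, |u (v j)|) * B := by
        refine (Finset.abs_sum_le_sum_abs _ _).trans (Finset.sum_le_sum fun v _ => ?_)
        rw [abs_mul, Finset.abs_prod]
        exact mul_le_mul_of_nonneg_left (hB v) (by positivity)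
    _ = B * (∑ j, |u j|) ^ k := by
        rw [← Finset.sum_mul, mul_comm, Finset.sum_pow', Fintype.piFinset_univ]

noncomputable def diagMvPolynomial (c : EuclideanSpace ℝ ι) : MvPolynomial ι ℝ :=
  ∑ v : Fin k → ι, MvPolynomial.C (Φ fun j => EuclideanSpace.single (v j) 1) *
    ∏ j, (MvPolynomial.X (v j) - MvPolynomial.C (c (v j)))

theorem totalDegree_diagMvPolynomial_le (c : EuclideanSpace ℝ ι) :
    (Φ.diagMvPolynomial c).totalDegree ≤ k := by
  refine (MvPolynomial.totalDegree_finsetSum _ _).trans (Finset.sup_le fun v _ => ?_)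
  refine (MvPolynomial.totalDegree_mul _ _).trans ?_
  rw [MvPolynomial.totalDegree_C, zero_add]
  refine (MvPolynomial.totalDegree_finsetProd _ _).trans ?_
  calc ∑ j, (MvPolynomial.X (v j) - MvPolynomial.C (c (v j)) : MvPolynomial ι ℝ).totalDegree
      ≤ ∑ _j : Fin k, 1 := Finset.sum_le_sum fun j _ =>
        (MvPolynomial.totalDegree_sub_C_le _ _).trans (MvPolynomial.totalDegree_X _).le
    _ = k := by simp

theorem eval_diagMvPolynomial (c y : EuclideanSpace ℝ ι) :
    MvPolynomial.eval (fun j => y j) (Φ.diagMvPolynomial c) = Φ (fun _ => y - c) := by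
  simp [diagMvPolynomial, apply_const_eq_sum Φ (y - c), mul_comm]

end ContinuousMultilinearMap

section Taylor

variable {ι : Type*} [Fintype ι] [DecidableEq ι]

noncomputable def taylorMvPolynomial (f : EuclideanSpace ℝ ι → ℝ)
    (s : Set (EuclideanSpace ℝ ι)) (c : EuclideanSpace ℝ ι) (q : ℕ) : MvPolynomial ι ℝ :=
  ∑ k ∈ Finset.range (q + 1), (k ! : ℝ)⁻¹ • (iteratedFDerivWithin ℝ k f s c).diagMvPolynomial c

variable (f : EuclideanSpace ℝ ι → ℝ) (s : Set (EuclideanSpace ℝ ι)) (c : EuclideanSpace ℝ ι)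
  (q : ℕ)

theorem totalDegree_taylorMvPolynomial_le : (taylorMvPolynomial f s c q).totalDegree ≤ q :=
  (MvPolynomial.totalDegree_finsetSum _ _).trans <| Finset.sup_le fun _ hk =>
    (MvPolynomial.totalDegree_smul_le _ _).trans <|
      (ContinuousMultilinearMap.totalDegree_diagMvPolynomial_le _ c).trans <|
        Nat.lt_succ_iff.mp (Finset.mem_range.mp hk)

theorem eval_taylorMvPolynomial (y : EuclideanSpace ℝ ι) :
    MvPolynomial.eval (fun j => y j) (taylorMvPolynomial f s c q) =
      ∑ k ∈ Finset.range (q + 1),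
        (k ! : ℝ)⁻¹ * iteratedFDerivWithin ℝ k f s c (fun _ => y - c) := by
  simp [taylorMvPolynomial, ContinuousMultilinearMap.eval_diagMvPolynomial]

end Taylor

theorem samplet_coefficient_decay_general (d q : ℕ) {ι : Type*} [Fintype ι]
    (x : ι → EuclideanSpace ℝ (Fin d)) (ω : ι → ℝ)
    (hnorm : ∑ i, ω i ^ 2 = 1)
    (hvanish : ∀ p : MvPolynomial (Fin d) ℝ, p.totalDegree ≤ q →
      ∑ i, ω i * MvPolynomial.eval (fun j => x i j) p = 0)
    (O : Set (EuclideanSpace ℝ (Fin d))) (hO : IsOpen O) (hconv : Convex ℝ O)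
    (hsupp : ∀ i, ω i ≠ 0 → x i ∈ O)
    (f : EuclideanSpace ℝ (Fin d) → ℝ) (hf : ContDiffOn ℝ (q + 1) f O)
    (B : ℝ)
    (hB : ∀ n ≤ q + 1, ∀ y ∈ O, ∀ v : Fin n → Fin d,
      |iteratedFDerivWithin ℝ n f O y
        (fun j => EuclideanSpace.single (v j) (1 : ℝ))| ≤ B) :
    |∑ i, ω i * f (x i)| ≤
      Real.sqrt (Finset.univ.filter fun i => ω i ≠ 0).card *
        ((d : ℝ) / 2) ^ (q + 1) *
        Metric.diam {y | ∃ i, ω i ≠ 0 ∧ y = x i} ^ (q + 1) /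
        (Nat.factorial (q + 1)) * B := by
  obtain ⟨i₀, hi₀⟩ : ∃ i, ω i ≠ 0 := by
    by_contra! h
    simp [h] at hnorm
  set τ := {y | ∃ i, ω i ≠ 0 ∧ y = x i}
  have hτ : τ.Finite := (Set.finite_range x).subset fun _ ⟨i, _, hy⟩ => ⟨i, hy.symm⟩
  have hxτ : ∀ i, ω i ≠ 0 → x i ∈ hτ.toFinset := fun i hi => hτ.mem_toFinset.mpr ⟨i, hi, rfl⟩
  obtain ⟨c, hcτ, hc⟩ := exists_mem_convexHull_sum_abs_sub_le hτ.toFinset ⟨x i₀, hxτ i₀ hi₀⟩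
  rw [hτ.coe_toFinset] at hcτ hc
  have hcO : c ∈ O := convexHull_min (by rintro _ ⟨i, hi, rfl⟩; exact hsupp i hi) hconv hcτ
  have hB0 : 0 ≤ B := (abs_nonneg _).trans (hB 0 (Nat.zero_le _) c hcO Fin.elim0)
  set P := taylorMvPolynomial f O c q
  have hremainder : ∀ i, ω i ≠ 0 → |f (x i) - MvPolynomial.eval (fun j => x i j) P| ≤
      B * ((d : ℝ) * Metric.diam τ / 2) ^ (q + 1) / (q + 1)! := by
    intro i hi
    have hseg := hconv.segment_subset hcO (hsupp i hi)
    rw [eval_taylorMvPolynomial]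
    refine (abs_sub_sum_iteratedFDerivWithin_le hO hf hseg fun z hz =>
      (iteratedFDerivWithin ℝ (q + 1) f O z).abs_apply_const_le
        (hB (q + 1) le_rfl z (hseg hz)) (x i - c)).trans ?_
    gcongr
    simpa using hc (x i) (hxτ i hi)
  calc |∑ i, ω i * f (x i)| = |∑ i, ω i * (f (x i) - MvPolynomial.eval (fun j => x i j) P)| := by
        simp [mul_sub, Finset.sum_sub_distrib, hvanish P (totalDegree_taylorMvPolynomial_le ..)]
    _ ≤ √(Finset.univ.filter fun i => ω i ≠ 0).card *
          (B * ((d : ℝ) * Metric.diam τ / 2) ^ (q + 1) / (q + 1)!) :=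
        abs_sum_mul_le_sqrt_card_mul hnorm.le (by positivity) hremainder
    _ = _ := by ring

/-- Samplet coefficient decay: if the signed measure `σ = Σᵢ ωᵢ δ_{xᵢ}` has
`q+1` vanishing moments and unit coefficient norm, and `f` is `(q+1)`-times
continuously differentiable on an open convex set `O` containing the support
points, with all partial derivatives up to order `q+1` bounded by `B`, then
`|Σᵢ ωᵢ f(xᵢ)| ≤ √|τ| (d/2)^{q+1} diam(τ)^{q+1} / (q+1)! · B`. -/
theorem samplet_coefficient_decay (d q : ℕ) {ι : Type*} [Fintype ι]
    [DecidableEq ι]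
    (x : ι → EuclideanSpace ℝ (Fin d)) (ω : ι → ℝ)
    (hnorm : ∑ i, ω i ^ 2 = 1)
    (hvanish : ∀ p : MvPolynomial (Fin d) ℝ, p.totalDegree ≤ q →
      ∑ i, ω i * MvPolynomial.eval (fun j => x i j) p = 0)
    (O : Set (EuclideanSpace ℝ (Fin d))) (hO : IsOpen O) (hconv : Convex ℝ O)
    (hsupp : ∀ i, ω i ≠ 0 → x i ∈ O)
    (f : EuclideanSpace ℝ (Fin d) → ℝ) (hf : ContDiffOn ℝ (q + 1) f O)
    (B : ℝ)
    (hB : ∀ n ≤ q + 1, ∀ y ∈ O, ∀ v : Fin n → Fin d,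
      |iteratedFDerivWithin ℝ n f O y
        (fun j => EuclideanSpace.single (v j) (1 : ℝ))| ≤ B) :
    |∑ i, ω i * f (x i)| ≤
      Real.sqrt (Finset.univ.filter fun i => ω i ≠ 0).card *
        ((d : ℝ) / 2) ^ (q + 1) *
        Metric.diam {y | ∃ i, ω i ≠ 0 ∧ y = x i} ^ (q + 1) /
        (Nat.factorial (q + 1)) * B :=
  samplet_coefficient_decay_general d q x ω hnorm hvanish O hO hconv hsupp f hf B hB
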